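/- Let f(x) = 1/(x log b) · 1_{(1,b)}(x) with b > 1, and let h be the density of X − Y where X, Y are independent with density f. Then for 0 < x < b−1, h(x) = (1/(x log² b)) · log((b−x)(x+1)/b), and h(0) = (1 − 1/b)/log² b. -/

import Mathlib

open MeasureTheory Real

/-!
For `x ≥ 0` the product `f (x + y) * f y` is supported on `1 < y < b - x`, where it equals
`1 / (log² b · y (x + y))`. For `x > 0` partial fractions `1 / (y (x + y)) = (1/y - 1/(x + y)) / x`
integrate to logarithms; for `x = 0` the integrand is `y⁻²`.
-/

noncomputable def truncParetoDensity (b x : ℝ) : ℝ :=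
  if 1 < x ∧ x < b then 1 / (x * log b) else 0

lemma truncParetoDensity_add_mul (b : ℝ) {x : ℝ} (hx : 0 ≤ x) :
    (fun y => truncParetoDensity b (x + y) * truncParetoDensity b y) =
      (Set.Ioo 1 (b - x)).indicator fun y => (log b ^ 2)⁻¹ * (y * (x + y))⁻¹ := by
  funext y
  unfold truncParetoDensity
  by_cases hy : y ∈ Set.Ioo 1 (b - x)
  · rw [Set.indicator_of_mem hy, if_pos ⟨by linarith [hy.1], by linarith [hy.2]⟩,
      if_pos ⟨hy.1, by linarith [hy.2]⟩]
    field_simp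
  · rw [Set.indicator_of_notMem hy]
    by_cases hy1 : 1 < y
    · rw [if_neg fun h => hy ⟨hy1, by linarith [h.2]⟩, zero_mul]
    · rw [if_neg (show ¬(1 < y ∧ y < b) from fun h => hy1 h.1), mul_zero]

lemma integral_truncParetoDensity_add_mul {b x : ℝ} (hx : 0 ≤ x) (hxb : x ≤ b - 1) :
    ∫ y, truncParetoDensity b (x + y) * truncParetoDensity b y =
      (log b ^ 2)⁻¹ * ∫ y in (1 : ℝ)..(b - x), (y * (x + y))⁻¹ := by
  rw [truncParetoDensity_add_mul b hx, integral_indicator measurableSet_Ioo,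
    ← integral_Ioc_eq_integral_Ioo, ← intervalIntegral.integral_of_le (by linarith),
    intervalIntegral.integral_const_mul]

lemma integral_inv_mul_add {x a c : ℝ} (hx : 0 < x) (ha : 0 < a) (hc : 0 < c) :
    ∫ y in a..c, (y * (x + y))⁻¹ = x⁻¹ * (log (c / a) - log ((x + c) / (x + a))) := by
  have hpos : ∀ y ∈ Set.uIcc a c, 0 < y := fun y hy => by
    rcases Set.mem_uIcc.mp hy with h | h <;> linarith [h.1]
  have hsplit : Set.EqOn (fun y => (y * (x + y))⁻¹) (fun y => x⁻¹ * (y⁻¹ - (x + y)⁻¹))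
      (Set.uIcc a c) := by
    intro y hy
    have := hpos y hy
    field_simp
    ring
  have hint : IntervalIntegrable (fun y : ℝ => y⁻¹) volume a c :=
    intervalIntegral.intervalIntegrable_inv (fun y hy => (hpos y hy).ne') continuousOn_id
  have hint' : IntervalIntegrable (fun y : ℝ => (x + y)⁻¹) volume a c :=
    intervalIntegral.intervalIntegrable_inv (fun y hy => by linarith [hpos y hy])
      (by fun_prop)
  rw [intervalIntegral.integral_congr hsplit, intervalIntegral.integral_const_mul,
    intervalIntegral.integral_sub hint hint', integral_inv_of_pos ha hc,
    intervalIntegral.integral_comp_add_left (fun y => y⁻¹),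
    integral_inv_of_pos (by linarith) (by linarith)]

lemma integral_inv_mul_self {a c : ℝ} (ha : 0 < a) (hc : 0 < c) :
    ∫ y in a..c, (y * y)⁻¹ = a⁻¹ - c⁻¹ := by
  have h0 : (0 : ℝ) ∉ Set.uIcc a c := fun h => by
    rcases Set.mem_uIcc.mp h with h | h <;> linarith [h.1]
  simp_rw [← sq, ← zpow_natCast, ← zpow_neg]
  rw [integral_zpow (Or.inr ⟨by norm_num, h0⟩)]
  norm_num
  ring

/-- Formula for the density of `X − Y` where `X, Y` are i.i.d. truncated Pareto. -/
theorem stmt_7 (b : ℝ) (hb : 1 < b)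
    (f : ℝ → ℝ)
    (hf : f = fun x => if 1 < x ∧ x < b then 1 / (x * Real.log b) else 0)
    (h : ℝ → ℝ) (hh : h = fun x => ∫ y, f (x + y) * f y) :
    (∀ x, 0 < x → x < b - 1 →
        h x = 1 / (x * (Real.log b) ^ 2) * Real.log ((b - x) * (x + 1) / b)) ∧
    h 0 = (1 - 1 / b) / (Real.log b) ^ 2 := by
  obtain rfl : f = truncParetoDensity b := hf
  subst hh
  refine ⟨fun x hx hxb => ?_, ?_⟩ <;> beta_reduce
  · rw [integral_truncParetoDensity_add_mul hx.le hxb.le,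
      integral_inv_mul_add hx one_pos (by linarith), add_sub_cancel, div_one,
      log_div (y := x + 1) (by linarith) (by linarith),
      log_div (by nlinarith) (by linarith), log_mul (by linarith) (by linarith)]
    field_simp
    ring
  · rw [integral_truncParetoDensity_add_mul le_rfl (by linarith), sub_zero]
    simp_rw [zero_add]
    rw [integral_inv_mul_self one_pos (by linarith)]
    field_simp
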